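/- arXiv:math/0503193 — 6 statements merged into one kernel-verified Lean document; each statement's English description precedes it below -/
import Mathlib

section
/- Let V be a finite-dimensional real vector space and let ω₁ and ω₂ be linear symplectic forms on V. Assume that every complex structure J on V that is tamed by ω₁ is also tamed by ω₂. Then there exists a real number λ > 0 such that ω₂ = λ · ω₁; in particular the set of complex structures tamed by ω₁ coincides with the set of complex structures tamed by ω₂. -/
/-- A linear symplectic form: an alternating, nondegenerate bilinear form. -/
def IsSymplecticForm {V : Type*} [AddCommGroup V] [Module ℝ V]
    (ω : V →ₗ[ℝ] V →ₗ[ℝ] ℝ) : Prop :=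
  (∀ v, ω v v = 0) ∧ ∀ v, v ≠ 0 → ∃ w, ω v w ≠ 0

/-- A complex structure: a linear endomorphism with `J ∘ J = -id`. -/
def IsComplexStructure {V : Type*} [AddCommGroup V] [Module ℝ V]
    (J : V →ₗ[ℝ] V) : Prop :=
  ∀ v, J (J v) = -v

/-- `J` is tamed by `ω` if `ω(v, J v) > 0` for all `v ≠ 0`. -/
def Tames {V : Type*} [AddCommGroup V] [Module ℝ V]
    (ω : V →ₗ[ℝ] V →ₗ[ℝ] ℝ) (J : V →ₗ[ℝ] V) : Prop :=
  ∀ v, v ≠ 0 → 0 < ω v (J v)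

/-!
If `ω₁ v w > 0`, rotating the plane `span {v, w}` (`v ↦ w ↦ -v`, after rescaling `w`) and extending
by a tamed complex structure on its `ω₁`-orthogonal complement, which exists by induction on the
dimension, gives a complex structure tamed by `ω₁` that sends `v` to a positive multiple of `w`.
Hence `ω₂ v w > 0` whenever `ω₁ v w > 0`, so for every `v ≠ 0` the functional `ω₂ v` is a positive
multiple `μ v • ω₁ v`. Skew-symmetry forces `μ u = μ w` whenever `ω₁ u w ≠ 0`, and any two nonzero
vectors pair nontrivially with a common third one, so `μ` is constant.
-/

open Module Submodule

namespace LinearMap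

theorem exists_apply_ne_zero_and_apply_ne_zero {R M N : Type*} [Semiring R] [AddCommMonoid M]
    [AddCommMonoid N] [Module R M] [Module R N] {f g : M →ₗ[R] N} (hf : f ≠ 0) (hg : g ≠ 0) :
    ∃ z, f z ≠ 0 ∧ g z ≠ 0 := by
  obtain ⟨x, hx⟩ := DFunLike.ne_iff.1 hf
  obtain ⟨y, hy⟩ := DFunLike.ne_iff.1 hg
  by_cases hgx : g x = 0
  · by_cases hfy : f y = 0
    · exact ⟨x + y, by simpa [hfy] using hx, by simpa [hgx] using hy⟩
    · exact ⟨y, hfy, hy⟩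
  · exact ⟨x, hx, hgx⟩

variable {𝕜 M : Type*} [Field 𝕜] [LinearOrder 𝕜] [IsStrictOrderedRing 𝕜] [AddCommGroup M]
  [Module 𝕜 M]

theorem exists_apply_pos {g : M →ₗ[𝕜] 𝕜} (hg : g ≠ 0) : ∃ x, 0 < g x := by
  obtain ⟨x, hx⟩ := DFunLike.ne_iff.1 hg
  rcases (show g x ≠ 0 from hx).lt_or_gt with hneg | hpos
  · exact ⟨-x, by simpa using hneg⟩
  · exact ⟨x, hpos⟩

theorem exists_pos_smul_eq_of_pos_imp_pos {f g : M →ₗ[𝕜] 𝕜} (hg : g ≠ 0)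
    (hfg : ∀ x, 0 < g x → 0 < f x) : ∃ c : 𝕜, 0 < c ∧ f = c • g := by
  obtain ⟨x₀, hx₀⟩ := exists_apply_pos hg
  -- `f` stays positive on the affine hyperplane `x₀ + ker g`, which forces it to vanish on `ker g`.
  have hker : ∀ x, g x = 0 → f x = 0 := by
    intro x hx
    by_contra hfx
    have := hfg (x₀ - (f x₀ / f x) • x) (by simpa [hx] using hx₀)
    simp [hfx] at this
  refine ⟨f x₀ / g x₀, div_pos (hfg x₀ hx₀) hx₀, LinearMap.ext fun x => ?_⟩
  have := hker (g x₀ • x - g x • x₀) (by simp [mul_comm])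
  simp only [map_sub, map_smul, smul_eq_mul, sub_eq_zero] at this
  simp only [smul_apply, smul_eq_mul]
  field_simp
  linarith

end LinearMap

theorem Submodule.mem_orthogonalBilin_span_pair {R M N : Type*} [CommSemiring R]
    [AddCommMonoid M] [AddCommMonoid N] [Module R M] [Module R N] {B : M →ₗ[R] M →ₗ[R] N}
    {v w x : M} : x ∈ (span R {v, w}).orthogonalBilin B ↔ B v x = 0 ∧ B w x = 0 := by
  simp only [mem_orthogonalBilin_iff, mem_span_pair]
  refine ⟨fun h => ⟨h v ⟨1, 0, by simp⟩, h w ⟨0, 1, by simp⟩⟩, ?_⟩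
  rintro ⟨hv, hw⟩ _ ⟨a, b, rfl⟩
  simp [hv, hw]

section Symplectic

variable {V : Type*} [AddCommGroup V] [Module ℝ V] {ω : V →ₗ[ℝ] V →ₗ[ℝ] ℝ}

theorem IsSymplecticForm.isAlt (hω : IsSymplecticForm ω) : ω.IsAlt := hω.1

theorem IsSymplecticForm.apply_ne_zero (hω : IsSymplecticForm ω) {v : V} (hv : v ≠ 0) :
    ω v ≠ 0 := by
  obtain ⟨w, hw⟩ := hω.2 v hv
  exact fun h => hw (by simp [h])

theorem IsSymplecticForm.exists_apply_eq_one (hω : IsSymplecticForm ω) {v : V} (hv : v ≠ 0) :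
    ∃ w, ω v w = 1 := by
  obtain ⟨w, hw⟩ := hω.2 v hv
  exact ⟨(ω v w)⁻¹ • w, by simp [hw]⟩

theorem tames_smul_iff {c : ℝ} (hc : 0 < c) {J : V →ₗ[ℝ] V} : Tames (c • ω) J ↔ Tames ω J := by
  simp only [Tames, LinearMap.smul_apply, smul_eq_mul, mul_pos_iff_of_pos_left hc]

theorem LinearMap.IsAlt.eq_of_apply_eq_smul {ω₁ ω₂ : V →ₗ[ℝ] V →ₗ[ℝ] ℝ} (h₁ : ω₁.IsAlt)
    (h₂ : ω₂.IsAlt) {u w : V} {a b : ℝ} (ha : ω₂ u = a • ω₁ u) (hb : ω₂ w = b • ω₁ w)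
    (huw : ω₁ u w ≠ 0) : a = b := by
  have hu := congr($ha w)
  have hw := congr($hb u)
  simp only [LinearMap.smul_apply, smul_eq_mul] at hu hw
  rw [← h₁.neg, ← h₂.neg] at hw
  exact mul_right_cancel₀ huw (by linarith)

theorem IsSymplecticForm.exists_eq_smul_of_forall_apply_eq_smul {ω₁ ω₂ : V →ₗ[ℝ] V →ₗ[ℝ] ℝ}
    (h₁ : IsSymplecticForm ω₁) (h : ∀ v, v ≠ 0 → ∃ μ : ℝ, 0 < μ ∧ ω₂ v = μ • ω₁ v) :
    ∃ lam : ℝ, 0 < lam ∧ ω₂ = lam • ω₁ := by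
  choose! μ hμpos hμ using h
  have h₂ : ω₂.IsAlt := fun v => by
    rcases eq_or_ne v 0 with rfl | hv
    · simp
    · simp [hμ v hv, h₁.isAlt.self_eq_zero]
  have hconst : ∀ u w, u ≠ 0 → w ≠ 0 → μ u = μ w := by
    intro u w hu hw
    obtain ⟨z, huz, hwz⟩ :=
      LinearMap.exists_apply_ne_zero_and_apply_ne_zero (h₁.apply_ne_zero hu) (h₁.apply_ne_zero hw)
    have hz : z ≠ 0 := by rintro rfl; simp at huz
    exact (h₁.isAlt.eq_of_apply_eq_smul h₂ (hμ u hu) (hμ z hz) huz).trans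
      (h₁.isAlt.eq_of_apply_eq_smul h₂ (hμ w hw) (hμ z hz) hwz).symm
  rcases subsingleton_or_nontrivial V with hV | hV
  · exact ⟨1, one_pos, LinearMap.ext fun u => by simp [Subsingleton.elim u 0]⟩
  obtain ⟨v₀, hv₀⟩ := exists_ne (0 : V)
  refine ⟨μ v₀, hμpos v₀ hv₀, LinearMap.ext fun u => ?_⟩
  rcases eq_or_ne u 0 with rfl | hu
  · simp
  · rw [hμ u hu, hconst u v₀ hu hv₀, LinearMap.smul_apply]

section Extension

variable {v w : V}

theorem LinearMap.IsAlt.apply_eq_neg_one (hω : ω.IsAlt) (hvw : ω v w = 1) : ω w v = -1 := by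
  rw [← hω.neg, hvw]

def projOrthogonalSpanPair (hω : ω.IsAlt) (hvw : ω v w = 1) :
    V →ₗ[ℝ] (span ℝ {v, w}).orthogonalBilin ω :=
  LinearMap.codRestrict _ (LinearMap.id + (ω w).smulRight v - (ω v).smulRight w) fun u => by
    rw [mem_orthogonalBilin_span_pair]
    simp [hω.self_eq_zero, hvw, hω.apply_eq_neg_one hvw]

theorem projOrthogonalSpanPair_apply (hω : ω.IsAlt) (hvw : ω v w = 1) (u : V) :
    (projOrthogonalSpanPair hω hvw u : V) = u + ω w u • v - ω v u • w := rfl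

theorem eq_smul_add_smul_add_projOrthogonalSpanPair (hω : ω.IsAlt) (hvw : ω v w = 1) (u : V) :
    u = (-ω w u) • v + ω v u • w + projOrthogonalSpanPair hω hvw u := by
  rw [projOrthogonalSpanPair_apply]; module

theorem projOrthogonalSpanPair_smul_add_smul_add (hω : ω.IsAlt) (hvw : ω v w = 1) (a b : ℝ)
    (q : (span ℝ {v, w}).orthogonalBilin ω) :
    projOrthogonalSpanPair hω hvw (a • v + b • w + q) = q := by
  have hq := mem_orthogonalBilin_span_pair.1 q.2
  ext
  simp [projOrthogonalSpanPair_apply, hq, hω.self_eq_zero, hvw, hω.apply_eq_neg_one hvw]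

theorem LinearMap.IsAlt.apply_smul_add_smul_add (hω : ω.IsAlt) (hvw : ω v w = 1) (a b a' b' : ℝ)
    (q q' : (span ℝ {v, w}).orthogonalBilin ω) :
    ω (a • v + b • w + q) (a' • v + b' • w + q') = a * b' - b * a' + ω q q' := by
  have hq := mem_orthogonalBilin_span_pair.1 q.2
  have hq' := mem_orthogonalBilin_span_pair.1 q'.2
  simp [hq', hω.eq_iff.1 hq.1, hω.eq_iff.1 hq.2, hω.self_eq_zero, hvw, hω.apply_eq_neg_one hvw]
  ring

def extendComplexStructure (hω : ω.IsAlt) (hvw : ω v w = 1)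
    (JQ : (span ℝ {v, w}).orthogonalBilin ω →ₗ[ℝ] (span ℝ {v, w}).orthogonalBilin ω) :
    V →ₗ[ℝ] V :=
  -(ω w).smulRight w - (ω v).smulRight v +
    (Submodule.subtype _ ∘ₗ JQ ∘ₗ projOrthogonalSpanPair hω hvw)

theorem extendComplexStructure_smul_add_smul_add (hω : ω.IsAlt) (hvw : ω v w = 1)
    (JQ : (span ℝ {v, w}).orthogonalBilin ω →ₗ[ℝ] (span ℝ {v, w}).orthogonalBilin ω)
    (a b : ℝ) (q : (span ℝ {v, w}).orthogonalBilin ω) :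
    extendComplexStructure hω hvw JQ (a • v + b • w + q) = (-b) • v + a • w + JQ q := by
  have hq := mem_orthogonalBilin_span_pair.1 q.2
  simp [extendComplexStructure, projOrthogonalSpanPair_smul_add_smul_add, hq,
    hω.self_eq_zero, hvw, hω.apply_eq_neg_one hvw]
  module

theorem extendComplexStructure_apply_left (hω : ω.IsAlt) (hvw : ω v w = 1)
    (JQ : (span ℝ {v, w}).orthogonalBilin ω →ₗ[ℝ] (span ℝ {v, w}).orthogonalBilin ω) :
    extendComplexStructure hω hvw JQ v = w := by
  simpa using extendComplexStructure_smul_add_smul_add hω hvw JQ 1 0 0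

theorem isComplexStructure_extendComplexStructure (hω : ω.IsAlt) (hvw : ω v w = 1)
    {JQ : (span ℝ {v, w}).orthogonalBilin ω →ₗ[ℝ] (span ℝ {v, w}).orthogonalBilin ω}
    (hJQ : IsComplexStructure JQ) : IsComplexStructure (extendComplexStructure hω hvw JQ) := by
  intro u
  rw [eq_smul_add_smul_add_projOrthogonalSpanPair hω hvw u,
    extendComplexStructure_smul_add_smul_add, extendComplexStructure_smul_add_smul_add, hJQ]
  push_cast
  module

theorem tames_extendComplexStructure (hω : ω.IsAlt) (hvw : ω v w = 1)
    {JQ : (span ℝ {v, w}).orthogonalBilin ω →ₗ[ℝ] (span ℝ {v, w}).orthogonalBilin ω}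
    (hJQ : Tames (LinearMap.BilinForm.restrict ω _) JQ) :
    Tames ω (extendComplexStructure hω hvw JQ) := by
  intro u hu
  rw [eq_smul_add_smul_add_projOrthogonalSpanPair hω hvw u] at hu ⊢
  set a := -ω w u
  set b := ω v u
  set q := projOrthogonalSpanPair hω hvw u
  rw [extendComplexStructure_smul_add_smul_add, hω.apply_smul_add_smul_add hvw]
  rcases eq_or_ne q 0 with hq | hq
  · have hab : a ≠ 0 ∨ b ≠ 0 := by
      contrapose! hu
      simp [hu, hq]
    rw [hq, ZeroMemClass.coe_zero, map_zero, LinearMap.zero_apply, add_zero]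
    rcases hab with h | h <;> nlinarith [mul_self_pos.2 h, mul_self_nonneg a, mul_self_nonneg b]
  · have : 0 < ω q (JQ q) := hJQ q hq
    nlinarith [mul_self_nonneg a, mul_self_nonneg b]

theorem IsSymplecticForm.restrict_orthogonalBilin_span_pair (hω : IsSymplecticForm ω)
    (hvw : ω v w = 1) :
    IsSymplecticForm (LinearMap.BilinForm.restrict ω ((span ℝ {v, w}).orthogonalBilin ω)) := by
  refine ⟨fun q => hω.isAlt.self_eq_zero q, fun q hq => ?_⟩
  obtain ⟨u, hu⟩ := hω.2 q (by simpa using hq)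
  rw [eq_smul_add_smul_add_projOrthogonalSpanPair hω.isAlt hvw u] at hu
  refine ⟨projOrthogonalSpanPair hω.isAlt hvw u, ?_⟩
  have := hω.isAlt.apply_smul_add_smul_add hvw 0 0 (-ω w u) (ω v u) q
    (projOrthogonalSpanPair hω.isAlt hvw u)
  simp only [zero_smul, zero_add, zero_mul, sub_zero] at this
  exact this ▸ hu

theorem finrank_orthogonalBilin_span_pair_lt [FiniteDimensional ℝ V] (hω : ω.IsAlt)
    (hvw : ω v w = 1) : finrank ℝ ((span ℝ {v, w}).orthogonalBilin ω) < finrank ℝ V := by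
  refine Submodule.finrank_lt fun htop => ?_
  have := (mem_orthogonalBilin_span_pair.1 (htop ▸ mem_top : v ∈ _)).2
  simp [hω.apply_eq_neg_one hvw] at this

end Extension

theorem IsSymplecticForm.exists_tames [FiniteDimensional ℝ V] (hω : IsSymplecticForm ω) :
    ∃ J, IsComplexStructure J ∧ Tames ω J := by
  induction hn : finrank ℝ V using Nat.strong_induction_on generalizing V with
  | _ n ih =>
  rcases subsingleton_or_nontrivial V with hV | hV
  · exact ⟨0, fun _ => Subsingleton.elim _ _, fun u hu => (hu (Subsingleton.elim u 0)).elim⟩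
  obtain ⟨v, hv⟩ := exists_ne (0 : V)
  obtain ⟨w, hvw⟩ := hω.exists_apply_eq_one hv
  obtain ⟨JQ, hJQ, hJQt⟩ := ih _ (hn ▸ finrank_orthogonalBilin_span_pair_lt hω.isAlt hvw)
    (hω.restrict_orthogonalBilin_span_pair hvw) rfl
  exact ⟨_, isComplexStructure_extendComplexStructure hω.isAlt hvw hJQ,
    tames_extendComplexStructure hω.isAlt hvw hJQt⟩

theorem IsSymplecticForm.exists_tames_apply_eq [FiniteDimensional ℝ V] (hω : IsSymplecticForm ω)
    {v w : V} (hvw : ω v w = 1) : ∃ J, IsComplexStructure J ∧ Tames ω J ∧ J v = w := by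
  obtain ⟨JQ, hJQ, hJQt⟩ := (hω.restrict_orthogonalBilin_span_pair hvw).exists_tames
  exact ⟨_, isComplexStructure_extendComplexStructure hω.isAlt hvw hJQ,
    tames_extendComplexStructure hω.isAlt hvw hJQt, extendComplexStructure_apply_left _ _ _⟩

theorem IsSymplecticForm.apply_pos_of_tames_imp_tames [FiniteDimensional ℝ V]
    {ω₁ ω₂ : V →ₗ[ℝ] V →ₗ[ℝ] ℝ} (h₁ : IsSymplecticForm ω₁)
    (h : ∀ J : V →ₗ[ℝ] V, IsComplexStructure J → Tames ω₁ J → Tames ω₂ J) {v w : V}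
    (hvw : 0 < ω₁ v w) : 0 < ω₂ v w := by
  obtain ⟨J, hJ, hJt, hJv⟩ :=
    h₁.exists_tames_apply_eq (v := v) (w := (ω₁ v w)⁻¹ • w) (by simp [hvw.ne'])
  have hv : v ≠ 0 := by rintro rfl; simp at hvw
  have := h J hJ hJt v hv
  rw [hJv, map_smul, smul_eq_mul] at this
  exact pos_of_mul_pos_right this (inv_pos.2 hvw).le

end Symplectic

theorem taming_determines_form_up_to_positive_scalar_general
    {V : Type*} [AddCommGroup V] [Module ℝ V] [FiniteDimensional ℝ V]
    (ω₁ ω₂ : V →ₗ[ℝ] V →ₗ[ℝ] ℝ)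
    (h₁ : IsSymplecticForm ω₁)
    (h : ∀ J : V →ₗ[ℝ] V, IsComplexStructure J → Tames ω₁ J → Tames ω₂ J) :
    ∃ lam : ℝ, 0 < lam ∧ ω₂ = lam • ω₁ ∧
      ∀ J : V →ₗ[ℝ] V, IsComplexStructure J → (Tames ω₁ J ↔ Tames ω₂ J) := by
  obtain ⟨lam, hlam, heq⟩ := h₁.exists_eq_smul_of_forall_apply_eq_smul fun v hv =>
    LinearMap.exists_pos_smul_eq_of_pos_imp_pos (h₁.apply_ne_zero hv) fun _ =>
      h₁.apply_pos_of_tames_imp_tames h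
  exact ⟨lam, hlam, heq, fun J _ => heq ▸ (tames_smul_iff hlam).symm⟩

theorem taming_determines_form_up_to_positive_scalar
    {V : Type*} [AddCommGroup V] [Module ℝ V] [FiniteDimensional ℝ V]
    (ω₁ ω₂ : V →ₗ[ℝ] V →ₗ[ℝ] ℝ)
    (h₁ : IsSymplecticForm ω₁) (h₂ : IsSymplecticForm ω₂)
    (h : ∀ J : V →ₗ[ℝ] V, IsComplexStructure J → Tames ω₁ J → Tames ω₂ J) :
    ∃ lam : ℝ, 0 < lam ∧ ω₂ = lam • ω₁ ∧
      ∀ J : V →ₗ[ℝ] V, IsComplexStructure J → (Tames ω₁ J ↔ Tames ω₂ J) :=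
  taming_determines_form_up_to_positive_scalar_general ω₁ ω₂ h₁ h
end

section
/- Let V be a finite-dimensional real vector space of dimension at least 4, let ω be a nondegenerate alternating bilinear form on V, and let α : V → ℝ be a nonzero linear functional. Then the exterior product α ∧ ω is nonzero, i.e. there exist vectors u, v, w ∈ V such that α(u)·ω(v,w) − α(v)·ω(u,w) + α(w)·ω(u,v) ≠ 0. -/
open Module

section

variable {K V : Type*} [Field K] [AddCommGroup V] [Module K V]

theorem LinearMap.exists_ne_zero_apply_eq_zero_of_finrank_gt_two [FiniteDimensional K V]
    (hV : 2 < finrank K V) (f g : V →ₗ[K] K) : ∃ v ≠ 0, f v = 0 ∧ g v = 0 := by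
  have hker : LinearMap.ker (f.prod g) ≠ ⊥ :=
    LinearMap.ker_ne_bot_of_finrank_lt (by simpa using hV)
  obtain ⟨v, hv, hv0⟩ := Submodule.exists_mem_ne_zero_of_ne_bot hker
  simp only [LinearMap.mem_ker, LinearMap.prod_apply, Function.prod, Prod.mk_eq_zero] at hv
  exact ⟨v, hv0, hv⟩

theorem LinearMap.eq_zero_of_eq_zero_on_ker_of_apply_eq_zero {α β : V →ₗ[K] K} {u : V}
    (hu : α u ≠ 0) (hβ : ∀ w, α w = 0 → β w = 0) (hβu : β u = 0) : β = 0 := by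
  ext w
  have hw : α (w - (α w / α u) • u) = 0 := by
    rw [map_sub, map_smul, smul_eq_mul, div_mul_cancel₀ _ hu, sub_self]
  calc β w = β (w - (α w / α u) • u) + (α w / α u) * β u := by simp
    _ = 0 := by rw [hβ _ hw, hβu, mul_zero, add_zero]

theorem LinearMap.apply_apply_eq_zero_of_wedge_eq_zero {ω : V →ₗ[K] V →ₗ[K] K} {α : V →ₗ[K] K}
    (hwedge : ∀ u v w, α u * ω v w - α v * ω u w + α w * ω u v = 0) {u : V} (hu : α u ≠ 0)
    {v w : V} (hv : α v = 0) (hw : α w = 0) : ω v w = 0 := by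
  have := hwedge u v w
  rw [hv, hw, zero_mul, zero_mul, sub_zero, add_zero] at this
  exact (mul_eq_zero.mp this).resolve_left hu

end

theorem wedge_of_nonzero_functional_with_nondegenerate_form_ne_zero_general
    {V : Type*} [AddCommGroup V] [Module ℝ V] [FiniteDimensional ℝ V]
    (hdim : 4 ≤ Module.finrank ℝ V)
    (ω : V →ₗ[ℝ] V →ₗ[ℝ] ℝ)
    (hnondeg : ∀ v, v ≠ 0 → ∃ w, ω v w ≠ 0)
    (α : V →ₗ[ℝ] ℝ) (hα : α ≠ 0) :
    ∃ u v w : V, α u * ω v w - α v * ω u w + α w * ω u v ≠ 0 := by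
  by_contra! hwedge
  obtain ⟨u, hu⟩ := DFunLike.ne_iff.mp hα
  -- `α ∧ ω = 0` makes `ker α` isotropic, so `v ∈ ker α` with `ω v u = 0` is orthogonal to all of `V`.
  obtain ⟨v, hv0, hαv, hωvu⟩ :=
    LinearMap.exists_ne_zero_apply_eq_zero_of_finrank_gt_two (by omega) α (ω.flip u)
  have hωv : ω v = 0 :=
    LinearMap.eq_zero_of_eq_zero_on_ker_of_apply_eq_zero hu
      (fun w hw ↦ LinearMap.apply_apply_eq_zero_of_wedge_eq_zero hwedge hu hαv hw) hωvu
  obtain ⟨w, hw⟩ := hnondeg v hv0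
  exact hw (by rw [hωv, LinearMap.zero_apply])

theorem wedge_of_nonzero_functional_with_nondegenerate_form_ne_zero
    {V : Type*} [AddCommGroup V] [Module ℝ V] [FiniteDimensional ℝ V]
    (hdim : 4 ≤ Module.finrank ℝ V)
    (ω : V →ₗ[ℝ] V →ₗ[ℝ] ℝ)
    (halt : ∀ v, ω v v = 0)
    (hnondeg : ∀ v, v ≠ 0 → ∃ w, ω v w ≠ 0)
    (α : V →ₗ[ℝ] ℝ) (hα : α ≠ 0) :
    ∃ u v w : V, α u * ω v w - α v * ω u w + α w * ω u v ≠ 0 :=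
  wedge_of_nonzero_functional_with_nondegenerate_form_ne_zero_general hdim ω hnondeg α hα
end

section
/- Let E be a real inner product space, let L ≥ 0, and let X : E → E be a Lipschitz map with Lipschitz constant L. Let x : ℝ → E be continuously differentiable with x(1) = x(0). Then |∫₀¹ ⟨x′(t), X(x(t))⟩ dt| ≤ L · ∫₀¹ ‖x′(t)‖² dt. -/
/-!
Since `x` is a loop, `∫₀¹ ⟪x', c⟫ = ⟪x 1 - x 0, c⟫ = 0` for every constant `c`, so `X ∘ x` may be
replaced by `X ∘ x - X (x 0)`, whose norm is at most `L ‖x t - x 0‖ ≤ L ∫₀¹ ‖x'‖`. Hence the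
integral is bounded by `L (∫₀¹ ‖x'‖)²`, and Cauchy–Schwarz gives `(∫₀¹ ‖x'‖)² ≤ ∫₀¹ ‖x'‖²`.
-/

open intervalIntegral

section

variable {E : Type*} [NormedAddCommGroup E]

/- `E` need not be complete, so `∫ deriv f` may be a junk value; the estimate is obtained from the
fencing theorem instead of the fundamental theorem of calculus. -/
theorem norm_sub_le_integral_norm_deriv [NormedSpace ℝ E] {f : ℝ → E} (hf : ContDiff ℝ 1 f)
    {a b t : ℝ} (ht : t ∈ Set.Icc a b) : ‖f t - f a‖ ≤ ∫ s in a..b, ‖deriv f s‖ := by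
  have hderiv : Continuous fun s => ‖deriv f s‖ := (hf.continuous_deriv le_rfl).norm
  have hfence : ‖f t - f a‖ ≤ ∫ s in a..t, ‖deriv f s‖ :=
    image_norm_le_of_norm_deriv_right_le_deriv_boundary (f := fun s => f s - f a)
      (hf.continuous.sub continuous_const).continuousOn
      (fun s _ => ((hf.differentiable one_ne_zero s).hasDerivAt.sub_const (f a)).hasDerivWithinAt)
      (by simp) (hderiv.integral_hasStrictDerivAt a · |>.hasDerivAt) (fun _ _ => le_rfl)
      ⟨ht.1, le_rfl⟩
  exact hfence.trans <| integral_mono_interval le_rfl ht.1 ht.2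
    (MeasureTheory.ae_of_all _ fun _ => norm_nonneg _) (hderiv.intervalIntegrable a b)

variable [InnerProductSpace ℝ E]

theorem integral_inner_deriv_const {f : ℝ → E} (hf : ContDiff ℝ 1 f) (c : E) (a b : ℝ) :
    ∫ t in a..b, inner ℝ (deriv f t) c = inner ℝ (f b) c - inner ℝ (f a) c :=
  integral_eq_sub_of_hasDerivAt
    (fun t _ => by
      simpa using (hf.differentiable one_ne_zero t).hasDerivAt.inner ℝ (hasDerivAt_const t c))
    (((hf.continuous_deriv le_rfl).inner continuous_const).intervalIntegrable a b)

theorem integral_inner_deriv_sub_const_of_eq {f g : ℝ → E} (hf : ContDiff ℝ 1 f)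
    (hg : Continuous g) (c : E) {a b : ℝ} (hfab : f b = f a) :
    ∫ t in a..b, inner ℝ (deriv f t) (g t - c) = ∫ t in a..b, inner ℝ (deriv f t) (g t) := by
  have hf' : Continuous (deriv f) := hf.continuous_deriv le_rfl
  simp only [inner_sub_right]
  rw [integral_sub ((hf'.inner hg).intervalIntegrable a b)
    ((hf'.inner continuous_const).intervalIntegrable a b), integral_inner_deriv_const hf, hfab,
    sub_self, sub_zero]

end

theorem sq_integral_le_mul_integral_sq {f : ℝ → ℝ} (hf : Continuous f) {a b : ℝ} (hab : a ≤ b) :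
    (∫ t in a..b, f t) ^ 2 ≤ (b - a) * ∫ t in a..b, f t ^ 2 := by
  have hquad (s : ℝ) :
      0 ≤ (b - a) * (s * s) + (-2 * ∫ t in a..b, f t) * s + ∫ t in a..b, f t ^ 2 :=
    calc 0 ≤ ∫ t in a..b, (f t - s) ^ 2 := integral_nonneg hab fun t _ => sq_nonneg _
      _ = ∫ t in a..b, (f t ^ 2 - 2 * s * f t + s ^ 2) := by congr 1; funext t; ring
      _ = _ := by
        rw [integral_add, integral_sub, integral_const_mul, integral_const, smul_eq_mul]
        · ring
        all_goals exact Continuous.intervalIntegrable (by fun_prop) a b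
  have hdiscrim := discrim_le_zero hquad
  rw [discrim] at hdiscrim
  nlinarith

theorem loop_pseudogradient_inequality
    {E : Type*} [NormedAddCommGroup E] [InnerProductSpace ℝ E]
    (L : ℝ) (hL : 0 ≤ L) (X : E → E)
    (hX : ∀ p q : E, ‖X p - X q‖ ≤ L * ‖p - q‖)
    (x : ℝ → E) (hx : ContDiff ℝ 1 x) (hloop : x 1 = x 0) :
    |∫ t in (0:ℝ)..1, (inner ℝ (deriv x t) (X (x t)) : ℝ)| ≤
      L * ∫ t in (0:ℝ)..1, ‖deriv x t‖ ^ 2 := by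
  set M := ∫ t in (0:ℝ)..1, ‖deriv x t‖
  have hx' : Continuous (deriv x) := hx.continuous_deriv le_rfl
  have hXx : Continuous fun t => X (x t) :=
    (LipschitzWith.of_dist_le_mul (K := ⟨L, hL⟩) fun p q => by
      rw [dist_eq_norm, dist_eq_norm]; exact hX p q).continuous.comp hx.continuous
  have hpointwise : ∀ t ∈ Set.Ioc (0:ℝ) 1,
      ‖inner ℝ (deriv x t) (X (x t) - X (x 0))‖ ≤ L * M * ‖deriv x t‖ := fun t ht =>
    calc _ ≤ ‖deriv x t‖ * (L * ‖x t - x 0‖) :=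
          (norm_inner_le_norm _ _).trans (by gcongr; exact hX _ _)
      _ ≤ ‖deriv x t‖ * (L * M) := by
          gcongr; exact norm_sub_le_integral_norm_deriv hx (Set.Ioc_subset_Icc_self ht)
      _ = L * M * ‖deriv x t‖ := by ring
  calc |∫ t in (0:ℝ)..1, (inner ℝ (deriv x t) (X (x t)) : ℝ)|
      = ‖∫ t in (0:ℝ)..1, inner ℝ (deriv x t) (X (x t) - X (x 0))‖ := by
        rw [integral_inner_deriv_sub_const_of_eq hx hXx _ hloop, Real.norm_eq_abs]
    _ ≤ ∫ t in (0:ℝ)..1, L * M * ‖deriv x t‖ :=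
      norm_integral_le_of_norm_le zero_le_one (MeasureTheory.ae_of_all _ hpointwise)
        ((continuous_const.mul hx'.norm).intervalIntegrable 0 1)
    _ = L * M ^ 2 := by rw [integral_const_mul]; ring
    _ ≤ L * ∫ t in (0:ℝ)..1, ‖deriv x t‖ ^ 2 := by
      gcongr
      simpa using sq_integral_le_mul_integral_sq hx'.norm zero_le_one
end

section
/- Let 0 < δ < 1, 0 < ε < 1 and 0 < c ≤ C be real numbers. Let g : ℝ → ℝ be differentiable at every point of (0, ∞), strictly increasing on (0, ∞), and satisfy: g(y) = (1 − δ) − 1/log y for all y ∈ (0, ε]; c ≤ g′(y) ≤ C for all y ∈ [ε, 1]; and g(y) = y for all y ≥ 1. Then there exists a constant K ≥ 1 such that for all S > 0 and all λ ≥ 1 one has g′(S/λ) · g(S) ≤ K · λ · g′(S) · g(S/λ). -/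
/-!
Write `h(y) = y g'(y) / g(y)`; with `t = S/λ ≤ S` the claim is `h(t) ≤ K h(S)`. Since
`g ≥ 1 - δ > 0`, `h` is bounded above on `(0, ∞)`, and since `g' ≥ c` on `[ε, 1]`, `g ≤ 1` there
and `g = id` beyond, `h` is bounded below by a positive constant on `[ε, ∞)`; this settles
`S ≥ ε`. On `(0, ε)` one has `h(y) = 1 / ((1 - δ) L² - L)` with `L = log y < 0`, which is
increasing in `y`, so `S < ε` needs no constant at all.
-/

open Real Set

namespace RescaledRadialCoordinate

theorem hasDerivAt_const_sub_one_div_log (a : ℝ) {y : ℝ} (hy : y ≠ 0) (hlog : log y ≠ 0) :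
    HasDerivAt (fun x => a - 1 / log x) (y⁻¹ / log y ^ 2) y := by
  simpa [one_div, neg_div] using ((hasDerivAt_log hy).inv hlog).const_sub a

theorem one_div_sq_mul_sub_le {a L L' : ℝ} (ha : 0 ≤ a) (hLL' : L' ≤ L) (hL : L < 0) :
    1 / L' ^ 2 * (a - 1 / L) ≤ 1 / L ^ 2 * (a - 1 / L') := by
  have hL' : L' < 0 := hLL'.trans_lt hL
  rw [div_mul_eq_mul_div, div_mul_eq_mul_div,
    div_le_div_iff₀ (sq_pos_of_neg hL') (sq_pos_of_neg hL)]
  have hexpand : ∀ x : ℝ, x ≠ 0 → 1 * (a - 1 / x) * x ^ 2 = a * x ^ 2 - x := fun x hx => by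
    field_simp
  rw [hexpand L hL.ne, hexpand L' hL'.ne]
  have hsq : L ^ 2 ≤ L' ^ 2 := by nlinarith
  nlinarith [mul_le_mul_of_nonneg_left hsq ha]

variable {g : ℝ → ℝ} {a ε : ℝ}

theorem deriv_eq_inv_div_log_sq (hε1 : ε < 1)
    (hsmall : ∀ y ∈ Ioc 0 ε, g y = a - 1 / log y) {y : ℝ} (hy : 0 < y) (hyε : y < ε) :
    deriv g y = y⁻¹ / log y ^ 2 := by
  have hev : g =ᶠ[nhds y] fun x => a - 1 / log x := by
    filter_upwards [Ioo_mem_nhds hy hyε] with x hx using hsmall x ⟨hx.1, hx.2.le⟩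
  rw [hev.deriv_eq]
  exact (hasDerivAt_const_sub_one_div_log a hy.ne' (log_neg hy (hyε.trans hε1)).ne).deriv

theorem deriv_eq_one_of_one_lt (hbig : ∀ y, 1 ≤ y → g y = y) {y : ℝ} (hy : 1 < y) :
    deriv g y = 1 := by
  have hev : g =ᶠ[nhds y] id := by
    filter_upwards [Ioi_mem_nhds hy] with x hx using hbig x hx.le
  rw [hev.deriv_eq, deriv_id]

theorem le_of_eq_sub_one_div_log (hε0 : 0 < ε) (hε1 : ε < 1) (hmono : StrictMonoOn g (Ioi 0))
    (hsmall : ∀ y ∈ Ioc 0 ε, g y = a - 1 / log y) {y : ℝ} (hy : 0 < y) : a ≤ g y := by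
  have hprofile : ∀ z ∈ Ioc 0 ε, a ≤ g z := fun z hz => by
    have : 1 / log z < 0 := one_div_neg.mpr (log_neg hz.1 (hz.2.trans_lt hε1))
    rw [hsmall z hz]
    linarith
  rcases le_or_gt y ε with hyε | hεy
  · exact hprofile y ⟨hy, hyε⟩
  · exact (hprofile ε ⟨hε0, le_rfl⟩).trans (hmono.monotoneOn hε0 hy hεy.le)

theorem mul_deriv_mul_le_of_lt (ha : 0 ≤ a) (hε1 : ε < 1)
    (hsmall : ∀ y ∈ Ioc 0 ε, g y = a - 1 / log y) {t S : ℝ} (ht : 0 < t) (htS : t ≤ S)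
    (hS : S < ε) : t * deriv g t * g S ≤ S * deriv g S * g t := by
  have htε : t < ε := htS.trans_lt hS
  have hS0 : 0 < S := ht.trans_le htS
  rw [deriv_eq_inv_div_log_sq hε1 hsmall ht htε, deriv_eq_inv_div_log_sq hε1 hsmall hS0 hS,
    hsmall t ⟨ht, htε.le⟩, hsmall S ⟨hS0, hS.le⟩, mul_div_assoc', mul_div_assoc',
    mul_inv_cancel₀ ht.ne', mul_inv_cancel₀ hS0.ne']
  exact one_div_sq_mul_sub_le ha (log_le_log ht htS) (log_neg hS0 (hS.trans hε1))

theorem exists_mul_deriv_le_mul (ha : 0 < a) (hε0 : 0 < ε) (hε1 : ε < 1) {C : ℝ}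
    (hmono : StrictMonoOn g (Ioi 0)) (hsmall : ∀ y ∈ Ioc 0 ε, g y = a - 1 / log y)
    (hmid : ∀ y ∈ Icc ε 1, deriv g y ≤ C) (hbig : ∀ y, 1 ≤ y → g y = y) :
    ∃ M, ∀ y, 0 < y → y * deriv g y ≤ M * g y := by
  set A := 1 / log ε ^ 2
  set B := max C 0
  refine ⟨max (A / a) (max (B / a) 1), fun y hy => ?_⟩
  have hga : a ≤ g y := le_of_eq_sub_one_div_log hε0 hε1 hmono hsmall hy
  have hbound : y * deriv g y ≤ max A (max B (g y)) := by
    rcases lt_or_ge y ε with hyε | hεy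
    · have hlog : log y ≤ log ε := log_le_log hy hyε.le
      have hlogε : log ε < 0 := log_neg hε0 hε1
      rw [deriv_eq_inv_div_log_sq hε1 hsmall hy hyε, mul_div_assoc', mul_inv_cancel₀ hy.ne']
      refine le_max_of_le_left (one_div_le_one_div_of_le (sq_pos_of_neg hlogε) ?_)
      nlinarith
    rcases le_or_gt y 1 with hy1 | hy1
    · refine le_max_of_le_right (le_max_of_le_left ?_)
      calc y * deriv g y ≤ y * B := mul_le_mul_of_nonneg_left
            ((hmid y ⟨hεy, hy1⟩).trans (le_max_left C 0)) hy.le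
        _ ≤ B := mul_le_of_le_one_left (le_max_right C 0) hy1
    · rw [deriv_eq_one_of_one_lt hbig hy1, mul_one, hbig y hy1.le]
      exact le_max_of_le_right (le_max_right B _)
  have hscale : ∀ D, 0 ≤ D → D ≤ D / a * g y := fun D hD => by
    rw [div_mul_eq_mul_div, le_div_iff₀ ha]
    exact mul_le_mul_of_nonneg_left hga hD
  refine hbound.trans (max_le ?_ (max_le ?_ ?_))
  · exact (hscale A (by positivity)).trans
      (mul_le_mul_of_nonneg_right (le_max_left _ _) (ha.le.trans hga))
  · exact (hscale B (le_max_right C 0)).trans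
      (mul_le_mul_of_nonneg_right (le_max_of_le_right (le_max_left _ _)) (ha.le.trans hga))
  · exact le_mul_of_one_le_left (ha.le.trans hga) (le_max_of_le_right (le_max_right _ _))

theorem exists_mul_le_mul_deriv (hε0 : 0 < ε) {c : ℝ} (hc : 0 < c)
    (hmono : StrictMonoOn g (Ioi 0)) (hmid : ∀ y ∈ Icc ε 1, c ≤ deriv g y)
    (hbig : ∀ y, 1 ≤ y → g y = y) :
    ∃ m, 0 < m ∧ ∀ y, ε ≤ y → m * g y ≤ y * deriv g y := by
  refine ⟨min 1 (ε * c), lt_min one_pos (mul_pos hε0 hc), fun y hεy => ?_⟩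
  have hy : 0 < y := hε0.trans_le hεy
  rcases le_or_gt y 1 with hy1 | hy1
  · have hg1 : g y ≤ 1 :=
      (hmono.monotoneOn hy (mem_Ioi.2 one_pos) hy1).trans_eq (hbig 1 le_rfl)
    calc min 1 (ε * c) * g y ≤ min 1 (ε * c) :=
          mul_le_of_le_one_right (le_min zero_le_one (mul_pos hε0 hc).le) hg1
      _ ≤ ε * c := min_le_right _ _
      _ ≤ y * deriv g y := mul_le_mul hεy (hmid y ⟨hεy, hy1⟩) hc.le hy.le
  · rw [deriv_eq_one_of_one_lt hbig hy1, mul_one, hbig y hy1.le]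
    exact mul_le_of_le_one_left hy.le (min_le_left _ _)

theorem exists_mul_deriv_mul_le (ha : 0 < a) (hε0 : 0 < ε) (hε1 : ε < 1) {c C : ℝ}
    (hc : 0 < c) (hmono : StrictMonoOn g (Ioi 0)) (hsmall : ∀ y ∈ Ioc 0 ε, g y = a - 1 / log y)
    (hmid : ∀ y ∈ Icc ε 1, c ≤ deriv g y ∧ deriv g y ≤ C) (hbig : ∀ y, 1 ≤ y → g y = y) :
    ∃ K, 1 ≤ K ∧ ∀ t S, 0 < t → t ≤ S → t * deriv g t * g S ≤ K * (S * deriv g S * g t) := by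
  obtain ⟨M, hM⟩ :=
    exists_mul_deriv_le_mul ha hε0 hε1 hmono hsmall (fun y hy => (hmid y hy).2) hbig
  obtain ⟨m, hm0, hm⟩ := exists_mul_le_mul_deriv hε0 hc hmono (fun y hy => (hmid y hy).1) hbig
  refine ⟨max 1 (M / m), le_max_left _ _, fun t S ht htS => ?_⟩
  have hS : 0 < S := ht.trans_le htS
  have hgpos : ∀ y, 0 < y → 0 < g y := fun y hy =>
    ha.trans_le (le_of_eq_sub_one_div_log hε0 hε1 hmono hsmall hy)
  rcases lt_or_ge S ε with hSε | hεS
  · have hderiv : 0 ≤ deriv g S := by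
      rw [deriv_eq_inv_div_log_sq hε1 hsmall hS hSε]
      positivity
    have hgt := hgpos t ht
    exact (mul_deriv_mul_le_of_lt ha.le hε1 hsmall ht htS hSε).trans
      (le_mul_of_one_le_left (by positivity) (le_max_left _ _))
  · have hgS := hgpos S hS
    have hgt := hgpos t ht
    calc t * deriv g t * g S ≤ M * g t * g S :=
          mul_le_mul_of_nonneg_right (hM t ht) hgS.le
      _ = M / m * (m * g S) * g t := by field_simp
      _ ≤ max 1 (M / m) * (S * deriv g S) * g t :=
          mul_le_mul_of_nonneg_right
            (mul_le_mul (le_max_right _ _) (hm S hεS) (by positivity) (by positivity)) hgt.le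
      _ = max 1 (M / m) * (S * deriv g S * g t) := by ring

end RescaledRadialCoordinate

theorem rescaled_radial_coordinate_comparison_general
    (δ ε c C : ℝ) (hδ1 : δ < 1) (hε0 : 0 < ε) (hε1 : ε < 1)
    (hc : 0 < c)
    (g : ℝ → ℝ)
    (hmono : StrictMonoOn g (Set.Ioi (0:ℝ)))
    (hsmall : ∀ y ∈ Set.Ioc (0:ℝ) ε, g y = (1 - δ) - 1 / Real.log y)
    (hmid : ∀ y ∈ Set.Icc ε (1:ℝ), c ≤ deriv g y ∧ deriv g y ≤ C)
    (hbig : ∀ y : ℝ, 1 ≤ y → g y = y) :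
    ∃ K : ℝ, 1 ≤ K ∧ ∀ S : ℝ, 0 < S → ∀ lam : ℝ, 1 ≤ lam →
      deriv g (S / lam) * g S ≤ K * lam * deriv g S * g (S / lam) := by
  obtain ⟨K, hK1, hK⟩ := RescaledRadialCoordinate.exists_mul_deriv_mul_le (sub_pos.2 hδ1)
    hε0 hε1 hc hmono hsmall hmid hbig
  refine ⟨K, hK1, fun S hS lam hlam => ?_⟩
  have ht : 0 < S / lam := div_pos hS (one_pos.trans_le hlam)
  refine le_of_mul_le_mul_left ?_ ht
  calc S / lam * (deriv g (S / lam) * g S) = S / lam * deriv g (S / lam) * g S := by ring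
    _ ≤ K * (S * deriv g S * g (S / lam)) := hK (S / lam) S ht (div_le_self hS.le hlam)
    _ = S / lam * (K * lam * deriv g S * g (S / lam)) := by field_simp

theorem rescaled_radial_coordinate_comparison
    (δ ε c C : ℝ) (hδ0 : 0 < δ) (hδ1 : δ < 1) (hε0 : 0 < ε) (hε1 : ε < 1)
    (hc : 0 < c) (hcC : c ≤ C)
    (g : ℝ → ℝ)
    (hdiff : ∀ y ∈ Set.Ioi (0:ℝ), DifferentiableAt ℝ g y)
    (hmono : StrictMonoOn g (Set.Ioi (0:ℝ)))
    (hsmall : ∀ y ∈ Set.Ioc (0:ℝ) ε, g y = (1 - δ) - 1 / Real.log y)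
    (hmid : ∀ y ∈ Set.Icc ε (1:ℝ), c ≤ deriv g y ∧ deriv g y ≤ C)
    (hbig : ∀ y : ℝ, 1 ≤ y → g y = y) :
    ∃ K : ℝ, 1 ≤ K ∧ ∀ S : ℝ, 0 < S → ∀ lam : ℝ, 1 ≤ lam →
      deriv g (S / lam) * g S ≤ K * lam * deriv g S * g (S / lam) :=
  rescaled_radial_coordinate_comparison_general δ ε c C hδ1 hε0 hε1 hc g hmono hsmall hmid hbig
end

section
/- Let a > 0 and let f : ℝ → ℝ be continuously differentiable with f(t) ≥ 0 for all t ∈ [0, a]. Suppose m is a real number such that f(t₀) ≤ m for some t₀ ∈ [0, a]. Then ∫₀ᵃ f(t)² dt ≤ a · (m + √a · (∫₀ᵃ f′(t)² dt)^{1/2})². -/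
/-! Integrating `f'` from a point where `f ≤ m` bounds `f` on `[0, a]` by `m + ∫₀ᵃ |f'|`, and
Cauchy–Schwarz bounds `∫₀ᵃ |f'|` by `√a ‖f'‖₂`. Since `f ≥ 0`, squaring this pointwise bound and
integrating over `[0, a]` gives the inequality. -/

open MeasureTheory Set

theorem integral_abs_le_sqrt_measureReal_mul_sqrt_integral_sq {α : Type*} [MeasurableSpace α]
    {μ : Measure α} [IsFiniteMeasure μ] {g : α → ℝ} (hg : MemLp g 2 μ) :
    ∫ x, |g x| ∂μ ≤ √(μ.real univ) * √(∫ x, g x ^ 2 ∂μ) := by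
  have h := integral_mul_le_Lp_mul_Lq_of_nonneg (μ := μ) Real.HolderConjugate.two_two
    (f := fun _ => (1 : ℝ)) (g := fun x => |g x|) (ae_of_all _ fun _ => zero_le_one)
    (ae_of_all _ fun _ => abs_nonneg _) (memLp_const 1) (by rw [ENNReal.ofReal_ofNat]; exact hg.abs)
  simp only [one_mul, Real.one_rpow, integral_const, smul_eq_mul, mul_one] at h
  have hsq : ∫ x, |g x| ^ (2 : ℝ) ∂μ = ∫ x, g x ^ 2 ∂μ := by simp_rw [Real.rpow_two, sq_abs]
  rwa [hsq, ← Real.sqrt_eq_rpow, ← Real.sqrt_eq_rpow] at h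

theorem intervalIntegral_abs_le_sqrt_mul_sqrt_integral_sq {g : ℝ → ℝ} {a b : ℝ} (hab : a ≤ b)
    (hg : ContinuousOn g (Icc a b)) :
    ∫ t in a..b, |g t| ≤ √(b - a) * √(∫ t in a..b, g t ^ 2) := by
  have hmem : MemLp g 2 (volume.restrict (Ioc a b)) :=
    (memLp_two_iff_integrable_sq
      ((hg.mono Ioc_subset_Icc_self).aestronglyMeasurable measurableSet_Ioc)).2
      ((hg.pow 2).integrableOn_Icc.mono_set Ioc_subset_Icc_self)
  have : IsFiniteMeasure (volume.restrict (Ioc a b)) := by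
    rw [isFiniteMeasure_restrict]; exact measure_Ioc_lt_top.ne
  rw [intervalIntegral.integral_of_le hab, intervalIntegral.integral_of_le hab]
  simpa [Measure.real, Real.volume_Ioc, hab] using
    integral_abs_le_sqrt_measureReal_mul_sqrt_integral_sq hmem

theorem sub_le_integral_abs_deriv {f : ℝ → ℝ} {a b s t : ℝ}
    (hdiff : ∀ x ∈ Icc a b, DifferentiableAt ℝ f x)
    (hint : IntervalIntegrable (deriv f) volume a b) (hs : s ∈ Icc a b) (ht : t ∈ Icc a b) :
    f t - f s ≤ ∫ u in a..b, |deriv f u| := by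
  have hab : a ≤ b := hs.1.trans hs.2
  have hsub : uIcc s t ⊆ uIcc a b := uIcc_subset_uIcc (Icc_subset_uIcc hs) (Icc_subset_uIcc ht)
  have hFTC : ∫ u in s..t, deriv f u = f t - f s :=
    intervalIntegral.integral_deriv_eq_sub
      (fun x hx => hdiff x (by simpa [uIcc_of_le hab] using hsub hx)) (hint.mono_set hsub)
  calc f t - f s ≤ |∫ u in s..t, deriv f u| := hFTC ▸ le_abs_self _
    _ ≤ |(∫ u in s..t, |deriv f u|)| := by
        simpa using intervalIntegral.norm_integral_le_abs_integral_norm (f := deriv f)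
    _ ≤ |(∫ u in a..b, |deriv f u|)| :=
        intervalIntegral.abs_integral_mono_interval (uIoc_subset_uIoc_of_uIcc_subset_uIcc hsub)
          (ae_of_all _ fun _ => abs_nonneg _) hint.abs
    _ = ∫ u in a..b, |deriv f u| :=
        abs_of_nonneg (intervalIntegral.integral_nonneg hab fun _ _ => abs_nonneg _)

theorem poincare_type_inequality
    (a : ℝ) (ha : 0 < a) (f : ℝ → ℝ) (hf : ContDiff ℝ 1 f)
    (hpos : ∀ t ∈ Set.Icc (0:ℝ) a, 0 ≤ f t)
    (m : ℝ) (hm : ∃ t₀ ∈ Set.Icc (0:ℝ) a, f t₀ ≤ m) :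
    (∫ t in (0:ℝ)..a, (f t) ^ 2) ≤
      a * (m + Real.sqrt a * Real.sqrt (∫ t in (0:ℝ)..a, (deriv f t) ^ 2)) ^ 2 := by
  obtain ⟨t₀, ht₀, hft₀⟩ := hm
  set K := m + Real.sqrt a * Real.sqrt (∫ t in (0:ℝ)..a, (deriv f t) ^ 2)
  have hderiv : Continuous (deriv f) := hf.continuous_deriv_one
  have hbound : ∀ t ∈ Icc 0 a, f t ≤ K := fun t ht => by
    have hosc := sub_le_integral_abs_deriv (fun x _ => hf.differentiable one_ne_zero x)
      (hderiv.intervalIntegrable 0 a) ht₀ ht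
    have hCS := intervalIntegral_abs_le_sqrt_mul_sqrt_integral_sq ha.le hderiv.continuousOn
    rw [sub_zero] at hCS
    linarith
  calc (∫ t in (0:ℝ)..a, (f t) ^ 2) ≤ ∫ _ in (0:ℝ)..a, K ^ 2 :=
        intervalIntegral.integral_mono_on ha.le ((hf.continuous.pow 2).intervalIntegrable 0 a)
          intervalIntegrable_const fun t ht => pow_le_pow_left₀ (hpos t ht) (hbound t ht) 2
    _ = a * K ^ 2 := by simp
end

section
/- Let A ≥ 0, B ≥ 0, C̄ ≥ 0 and R ∈ ℝ. Let φ : ℝ → ℝ be twice continuously differentiable with φ(s) ≥ 0 for all s, 0 ≤ φ′(s) ≤ 1 and φ″(s) ≥ 0 for all s, φ(s) = 0 and φ′(s) = 0 for all s ≤ R, and s ≤ φ(s) + C̄ for all s ≥ 0. Let α : ℝ × ℝ → ℝ be twice continuously differentiable with α ≥ 0, and suppose that Δα(p) ≥ −A − B·α(p) at every point p ∈ ℝ × ℝ with α(p) ≥ R. Then Δ(φ ∘ α)(p) ≥ −(A + B·C̄) − B·(φ ∘ α)(p) at every point p ∈ ℝ × ℝ. -/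
/-- The Laplacian of a function `u : ℝ × ℝ → ℝ`,
`Δu = ∂²u/∂s² + ∂²u/∂t²`. -/
noncomputable def laplacian2 (u : ℝ × ℝ → ℝ) (p : ℝ × ℝ) : ℝ :=
  deriv (fun s => deriv (fun s' => u (s', p.2)) s) p.1 +
    deriv (fun t => deriv (fun t' => u (p.1, t')) t) p.2

/-!
By the chain rule, `Δ(φ ∘ α) = φ''(α) |∇α|² + φ'(α) Δα`. The first term is nonnegative since
`φ'' ≥ 0`. The second is at least `φ'(α) (-A - B α)`: on `{α ≥ R}` by hypothesis, and on
`{α < R}` because `φ'(α) = 0` there. Finally `α ≤ φ(α) + C̄`, so `-A - B α` is bounded below by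
the nonpositive number `-(A + B C̄) - B φ(α)`, which `0 ≤ φ'(α) ≤ 1` can only increase.
-/

theorem deriv_deriv_comp {φ f : ℝ → ℝ} (hφ : ContDiff ℝ 2 φ) (hf : ContDiff ℝ 2 f) (x : ℝ) :
    deriv (deriv fun y => φ (f y)) x =
      deriv (deriv φ) (f x) * deriv f x ^ 2 + deriv φ (f x) * deriv (deriv f) x := by
  obtain ⟨hφ1, -, hφ'⟩ := contDiff_succ_iff_deriv.mp (show ContDiff ℝ (1 + 1) φ from hφ)
  obtain ⟨hf1, -, hf'⟩ := contDiff_succ_iff_deriv.mp (show ContDiff ℝ (1 + 1) f from hf)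
  have hφ'_diff : Differentiable ℝ (deriv φ) := hφ'.differentiable one_ne_zero
  have hchain : deriv (fun y => φ (f y)) = fun y => deriv φ (f y) * deriv f y :=
    funext fun y => deriv_comp y (hφ1 (f y)) (hf1 y)
  have hchain' : deriv (fun y => deriv φ (f y)) x = deriv (deriv φ) (f x) * deriv f x :=
    deriv_comp x (hφ'_diff (f x)) (hf1 x)
  have hφ'_comp : DifferentiableAt ℝ (fun y => deriv φ (f y)) x := (hφ'_diff (f x)).comp x (hf1 x)
  rw [hchain, deriv_fun_mul hφ'_comp (hf'.differentiable one_ne_zero x), hchain']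
  ring

theorem laplacian2_comp {φ : ℝ → ℝ} {u : ℝ × ℝ → ℝ} (hφ : ContDiff ℝ 2 φ) (hu : ContDiff ℝ 2 u)
    (p : ℝ × ℝ) :
    laplacian2 (fun q => φ (u q)) p =
      deriv (deriv φ) (u p) *
          (deriv (fun s => u (s, p.2)) p.1 ^ 2 + deriv (fun t => u (p.1, t)) p.2 ^ 2) +
        deriv φ (u p) * laplacian2 u p := by
  unfold laplacian2
  rw [deriv_deriv_comp (f := fun s => u (s, p.2)) hφ (hu.comp (contDiff_id.prodMk contDiff_const)),
    deriv_deriv_comp (f := fun t => u (p.1, t)) hφ (hu.comp (contDiff_const.prodMk contDiff_id))]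
  ring

theorem cutoff_laplacian_inequality_general
    (A B Cbar R : ℝ) (hA : 0 ≤ A) (hB : 0 ≤ B) (hCbar : 0 ≤ Cbar)
    (φ : ℝ → ℝ) (hφ : ContDiff ℝ 2 φ)
    (hφpos : ∀ s, 0 ≤ φ s)
    (hφ' : ∀ s, 0 ≤ deriv φ s ∧ deriv φ s ≤ 1)
    (hφ'' : ∀ s, 0 ≤ deriv (deriv φ) s)
    (hφ'zero : ∀ s, s ≤ R → deriv φ s = 0)
    (hφbound : ∀ s, 0 ≤ s → s ≤ φ s + Cbar)
    (α : ℝ × ℝ → ℝ) (hα : ContDiff ℝ 2 α)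
    (hΔα : ∀ p : ℝ × ℝ, R ≤ α p → -A - B * α p ≤ laplacian2 α p) :
    ∀ p : ℝ × ℝ,
      -(A + B * Cbar) - B * φ (α p) ≤ laplacian2 (fun q => φ (α q)) p := by
  intro p
  set a := α p
  obtain ⟨hφ'a_nonneg, hφ'a_le_one⟩ := hφ' a
  have hconvex : 0 ≤ deriv (deriv φ) a *
      (deriv (fun s => α (s, p.2)) p.1 ^ 2 + deriv (fun t => α (p.1, t)) p.2 ^ 2) :=
    mul_nonneg (hφ'' a) (by positivity)
  have hdrift : deriv φ a * (-A - B * a) ≤ deriv φ a * laplacian2 α p := by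
    rcases le_or_gt R a with h | h
    · exact mul_le_mul_of_nonneg_left (hΔα p h) hφ'a_nonneg
    · simp [hφ'zero a h.le]
  have ha_le : a ≤ φ a + Cbar := by
    rcases le_or_gt 0 a with h | h
    · exact hφbound a h
    · linarith [hφpos a]
  have hfloor : -(A + B * Cbar) - B * φ a ≤ deriv φ a * (-A - B * a) :=
    calc -(A + B * Cbar) - B * φ a
        ≤ deriv φ a * (-(A + B * Cbar) - B * φ a) :=
          le_mul_of_le_one_left
            (by linarith [mul_nonneg hB hCbar, mul_nonneg hB (hφpos a)]) hφ'a_le_one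
      _ ≤ deriv φ a * (-A - B * a) :=
          mul_le_mul_of_nonneg_left
            (by linarith [mul_le_mul_of_nonneg_left ha_le hB]) hφ'a_nonneg
  rw [laplacian2_comp hφ hα]
  linarith

theorem cutoff_laplacian_inequality
    (A B Cbar R : ℝ) (hA : 0 ≤ A) (hB : 0 ≤ B) (hCbar : 0 ≤ Cbar)
    (φ : ℝ → ℝ) (hφ : ContDiff ℝ 2 φ)
    (hφpos : ∀ s, 0 ≤ φ s)
    (hφ' : ∀ s, 0 ≤ deriv φ s ∧ deriv φ s ≤ 1)
    (hφ'' : ∀ s, 0 ≤ deriv (deriv φ) s)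
    (hφzero : ∀ s, s ≤ R → φ s = 0)
    (hφ'zero : ∀ s, s ≤ R → deriv φ s = 0)
    (hφbound : ∀ s, 0 ≤ s → s ≤ φ s + Cbar)
    (α : ℝ × ℝ → ℝ) (hα : ContDiff ℝ 2 α) (hαpos : ∀ p, 0 ≤ α p)
    (hΔα : ∀ p : ℝ × ℝ, R ≤ α p → -A - B * α p ≤ laplacian2 α p) :
    ∀ p : ℝ × ℝ,
      -(A + B * Cbar) - B * φ (α p) ≤ laplacian2 (fun q => φ (α q)) p :=
  cutoff_laplacian_inequality_general A B Cbar R hA hB hCbar φ hφ hφpos hφ' hφ'' hφ'zero hφbound α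
    hα hΔα
end
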